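/- Let B > 0, T > 0 and a ∈ ℝ with |a| > B/2, and write A₁ = (−B/2 − a)T and A₂ = (B/2 − a)T. Then ∫_{−B/2}^{B/2} f² · sinc²((f − a)T) df = (1/(π²T³)) · (b₀ + b₁ + b₂), where b₀ = BT/2 − (sin(2πA₂) − sin(2πA₁))/(4π), b₁ = aT · ( ln|B/2 − a| − ln|B/2 + a| − ∫_{2πA₁}^{2πA₂} (cos t)/t dt ), and b₂ = (aT)² · ( sin²(πA₁)/A₁ − sin²(πA₂)/A₂ + π · ∫_{2πA₁}^{2πA₂} (sin t)/t dt ). -/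

import Mathlib

set_option maxHeartbeats 1000000

open MeasureTheory Real intervalIntegral

/-- The combined antiderivative for the three pieces of the sinc² integral. -/
noncomputable def rngPhi (c L : ℝ) (x : ℝ) : ℝ :=
  x / 2 - Real.sin (2 * Real.pi * x) / (4 * Real.pi)
    + c * (Real.log x - ∫ t in L..(2 * Real.pi * x), Real.cos t / t)
    + c ^ 2 * (-(Real.sin (Real.pi * x) ^ 2 / x)
        + Real.pi * ∫ t in L..(2 * Real.pi * x), Real.sin t / t)

/-- The integrand after substitution and division by the constant `1/(π²T²)`. -/
noncomputable def rngPsi (c : ℝ) (x : ℝ) : ℝ :=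
  Real.sin (Real.pi * x) ^ 2 + 2 * c * (Real.sin (Real.pi * x) ^ 2 / x)
    + c ^ 2 * (Real.sin (Real.pi * x) ^ 2 / x ^ 2)

private lemma uIcc_ne_zero {p q t : ℝ} (h : (0 < p ∧ 0 < q) ∨ (p < 0 ∧ q < 0))
    (ht : t ∈ Set.uIcc p q) : t ≠ 0 := by
  rw [Set.mem_uIcc] at ht
  rcases h with ⟨h1, h2⟩ | ⟨h1, h2⟩ <;> rcases ht with ⟨u, v⟩ | ⟨u, v⟩ <;>
    intro h0 <;> subst h0 <;> linarith

private lemma intble_cos_div {p q : ℝ} (h : ∀ t ∈ Set.uIcc p q, t ≠ 0) :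
    IntervalIntegrable (fun t => Real.cos t / t) volume p q := by
  apply ContinuousOn.intervalIntegrable
  exact ContinuousOn.div Real.continuous_cos.continuousOn continuousOn_id h

private lemma intble_sin_div {p q : ℝ} (h : ∀ t ∈ Set.uIcc p q, t ≠ 0) :
    IntervalIntegrable (fun t => Real.sin t / t) volume p q := by
  apply ContinuousOn.intervalIntegrable
  exact ContinuousOn.div Real.continuous_sin.continuousOn continuousOn_id h

private lemma hasDerivAt_rngPhi (c L : ℝ) {x : ℝ} (hx : x ≠ 0)
    (hsub : ∀ t ∈ Set.uIcc L (2 * Real.pi * x), t ≠ 0) :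
    HasDerivAt (rngPhi c L) (rngPsi c x) x := by
  have hπ : (0:ℝ) < Real.pi := Real.pi_pos
  have hπ0 : Real.pi ≠ 0 := ne_of_gt hπ
  have h2πx : 2 * Real.pi * x ≠ 0 := by
    exact hsub _ (Set.right_mem_uIcc)
  have hlin : HasDerivAt (fun y : ℝ => 2 * Real.pi * y) (2 * Real.pi) x := by
    simpa using (hasDerivAt_id x).const_mul (2 * Real.pi)
  have hlinπ : HasDerivAt (fun y : ℝ => Real.pi * y) Real.pi x := by
    simpa using (hasDerivAt_id x).const_mul Real.pi
  -- the moving-endpoint integrals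
  have hCi0 : HasDerivAt (fun y => ∫ t in L..y, Real.cos t / t)
      (Real.cos (2 * Real.pi * x) / (2 * Real.pi * x)) (2 * Real.pi * x) := by
    apply intervalIntegral.integral_hasDerivAt_right (intble_cos_div hsub)
      (((Real.measurable_cos.div measurable_id).aestronglyMeasurable).stronglyMeasurableAtFilter)
    exact Real.continuous_cos.continuousAt.div continuousAt_id h2πx
  have hSi0 : HasDerivAt (fun y => ∫ t in L..y, Real.sin t / t)
      (Real.sin (2 * Real.pi * x) / (2 * Real.pi * x)) (2 * Real.pi * x) := by
    apply intervalIntegral.integral_hasDerivAt_right (intble_sin_div hsub)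
      (((Real.measurable_sin.div measurable_id).aestronglyMeasurable).stronglyMeasurableAtFilter)
    exact Real.continuous_sin.continuousAt.div continuousAt_id h2πx
  have hCi : HasDerivAt (fun y : ℝ => ∫ t in L..(2 * Real.pi * y), Real.cos t / t)
      (Real.cos (2 * Real.pi * x) / (2 * Real.pi * x) * (2 * Real.pi)) x :=
    HasDerivAt.comp x hCi0 hlin
  have hSi : HasDerivAt (fun y : ℝ => ∫ t in L..(2 * Real.pi * y), Real.sin t / t)
      (Real.sin (2 * Real.pi * x) / (2 * Real.pi * x) * (2 * Real.pi)) x :=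
    HasDerivAt.comp x hSi0 hlin
  have hsin2 : HasDerivAt (fun y : ℝ => Real.sin (2 * Real.pi * y))
      (Real.cos (2 * Real.pi * x) * (2 * Real.pi)) x :=
    HasDerivAt.comp x (Real.hasDerivAt_sin (2 * Real.pi * x)) hlin
  have hsinsq : HasDerivAt (fun y : ℝ => Real.sin (Real.pi * y) ^ 2)
      (2 * Real.sin (Real.pi * x) ^ 1 * (Real.cos (Real.pi * x) * Real.pi)) x :=
    (HasDerivAt.comp x (Real.hasDerivAt_sin (Real.pi * x)) hlinπ).pow 2
  have hdiv : HasDerivAt (fun y : ℝ => Real.sin (Real.pi * y) ^ 2 / y)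
      ((2 * Real.sin (Real.pi * x) ^ 1 * (Real.cos (Real.pi * x) * Real.pi) * x
          - Real.sin (Real.pi * x) ^ 2 * 1) / x ^ 2) x :=
    hsinsq.div (hasDerivAt_id x) hx
  have hlog : HasDerivAt Real.log x⁻¹ x := Real.hasDerivAt_log hx
  have H := (((hasDerivAt_id x).div_const 2).sub (hsin2.div_const (4 * Real.pi))).add
      ((hlog.sub hCi).const_mul c) |>.add
      ((hdiv.neg.add (hSi.const_mul Real.pi)).const_mul (c ^ 2))
  have : HasDerivAt (rngPhi c L)
      (1 / 2 - Real.cos (2 * Real.pi * x) * (2 * Real.pi) / (4 * Real.pi)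
        + c * (x⁻¹ - Real.cos (2 * Real.pi * x) / (2 * Real.pi * x) * (2 * Real.pi))
        + c ^ 2 * (-((2 * Real.sin (Real.pi * x) ^ 1 * (Real.cos (Real.pi * x) * Real.pi) * x
              - Real.sin (Real.pi * x) ^ 2 * 1) / x ^ 2)
            + Real.pi * (Real.sin (2 * Real.pi * x) / (2 * Real.pi * x) * (2 * Real.pi)))) x := by
    exact H
  convert this using 1
  have h2 : (2:ℝ) * Real.pi * x = 2 * (Real.pi * x) := by ring
  rw [rngPsi, h2, Real.sin_two_mul, Real.cos_two_mul]
  have hsq : Real.cos (Real.pi * x) ^ 2 = 1 - Real.sin (Real.pi * x) ^ 2 :=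
    Real.cos_sq' (Real.pi * x)
  rw [hsq]
  field_simp
  ring

/-- Full closed-form evaluation of the ranging-error integral
`Q = ∫_{−B/2}^{B/2} f² sinc²((f−a)T) df` (with `sinc x = sin(πx)/(πx)`) for `B, T > 0`
and `|a| > B/2`, with `A₁ = (−B/2 − a)T` and `A₂ = (B/2 − a)T`:
`Q = (1/(π²T³))(b₀ + b₁ + b₂)`. -/
theorem stmt_18 (B T a : ℝ) (hB : 0 < B) (hT : 0 < T) (ha : B / 2 < |a|)
    (A₁ A₂ b₀ b₁ b₂ : ℝ)
    (hA₁ : A₁ = (-B / 2 - a) * T) (hA₂ : A₂ = (B / 2 - a) * T)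
    (hb₀ : b₀ = B * T / 2 -
      (Real.sin (2 * Real.pi * A₂) - Real.sin (2 * Real.pi * A₁)) / (4 * Real.pi))
    (hb₁ : b₁ = a * T *
      (Real.log |B / 2 - a| - Real.log |B / 2 + a| -
        ∫ t in (2 * Real.pi * A₁)..(2 * Real.pi * A₂), Real.cos t / t))
    (hb₂ : b₂ = (a * T) ^ 2 *
      (Real.sin (Real.pi * A₁) ^ 2 / A₁ - Real.sin (Real.pi * A₂) ^ 2 / A₂ +
        Real.pi * ∫ t in (2 * Real.pi * A₁)..(2 * Real.pi * A₂), Real.sin t / t)) :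
    ∫ f in (-B / 2)..(B / 2),
        f ^ 2 * (Real.sin (Real.pi * ((f - a) * T)) / (Real.pi * ((f - a) * T))) ^ 2 =
      (1 / (Real.pi ^ 2 * T ^ 3)) * (b₀ + b₁ + b₂) := by
  have hπ : (0:ℝ) < Real.pi := Real.pi_pos
  have hπ0 : Real.pi ≠ 0 := ne_of_gt hπ
  have hT0 : T ≠ 0 := ne_of_gt hT
  have hacase : B / 2 < a ∨ B / 2 < -a := lt_abs.mp ha
  have hsign : (0 < A₁ ∧ 0 < A₂) ∨ (A₁ < 0 ∧ A₂ < 0) := by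
    rcases hacase with h | h
    · right; constructor <;> [subst hA₁; subst hA₂] <;> nlinarith
    · left; constructor <;> [subst hA₁; subst hA₂] <;> nlinarith
  have hA₁0 : A₁ ≠ 0 := uIcc_ne_zero hsign Set.left_mem_uIcc
  have hA₂0 : A₂ ≠ 0 := uIcc_ne_zero hsign Set.right_mem_uIcc
  have hx0 : ∀ x ∈ Set.uIcc A₁ A₂, x ≠ 0 := fun x hx => uIcc_ne_zero hsign hx
  set c : ℝ := a * T with hcdef
  set L : ℝ := 2 * Real.pi * A₁ with hLdef
  -- step 1: rewrite the integrand pointwise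
  have hpt : ∀ f : ℝ,
      f ^ 2 * (Real.sin (Real.pi * ((f - a) * T)) / (Real.pi * ((f - a) * T))) ^ 2 =
        (1 / (Real.pi ^ 2 * T ^ 2)) * rngPsi c ((f - a) * T) := by
    intro f
    by_cases hu : (f - a) * T = 0
    · rw [hu, rngPsi]
      simp
    · have hf : f = (f - a) * T / T + a := by field_simp; ring
      have hfa : f - a ≠ 0 := fun h => hu (by rw [h]; ring)
      rw [rngPsi]
      rw [hf]
      rw [hcdef]
      field_simp
      rw [show f - a + a - a = f - a by ring, show f - a + a = f by ring]
      field_simp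
      ring
  -- step 2: substitution
  have hsub1 : (∫ f in (-B / 2)..(B / 2),
        f ^ 2 * (Real.sin (Real.pi * ((f - a) * T)) / (Real.pi * ((f - a) * T))) ^ 2)
      = (1 / (Real.pi ^ 2 * T ^ 2)) * ∫ f in (-B / 2)..(B / 2), rngPsi c ((f - a) * T) := by
    simp only [hpt]
    rw [intervalIntegral.integral_const_mul]
  have hsub2 : (∫ f in (-B / 2)..(B / 2), rngPsi c ((f - a) * T))
      = T⁻¹ • ∫ u in A₁..A₂, rngPsi c u := by
    have h1 : (∫ f in (-B / 2)..(B / 2), rngPsi c ((f - a) * T))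
        = ∫ x in (-B / 2 - a)..(B / 2 - a), rngPsi c (x * T) :=
      intervalIntegral.integral_comp_sub_right (fun y => rngPsi c (y * T)) a
    have h2 : (∫ x in (-B / 2 - a)..(B / 2 - a), rngPsi c (x * T))
        = T⁻¹ • ∫ u in ((-B / 2 - a) * T)..((B / 2 - a) * T), rngPsi c u :=
      intervalIntegral.integral_comp_mul_right (rngPsi c) hT0
    rw [h1, h2, ← hA₁, ← hA₂]
  -- step 3: FTC
  have hderiv : ∀ x ∈ Set.uIcc A₁ A₂, HasDerivAt (rngPhi c L) (rngPsi c x) x := by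
    intro x hx
    apply hasDerivAt_rngPhi c L (hx0 x hx)
    intro t ht
    have hmem : 2 * Real.pi * x ∈ Set.uIcc L (2 * Real.pi * A₂) := by
      rw [hLdef, Set.mem_uIcc]
      rw [Set.mem_uIcc] at hx
      rcases hx with ⟨u, v⟩ | ⟨u, v⟩
      · left; constructor <;> nlinarith
      · right; constructor <;> nlinarith
    have hsub : Set.uIcc L (2 * Real.pi * x) ⊆ Set.uIcc L (2 * Real.pi * A₂) :=
      Set.uIcc_subset_uIcc Set.left_mem_uIcc hmem
    have hsign2 : (0 < L ∧ 0 < 2 * Real.pi * A₂) ∨ (L < 0 ∧ 2 * Real.pi * A₂ < 0) := by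
      rw [hLdef]
      rcases hsign with ⟨h1, h2⟩ | ⟨h1, h2⟩
      · left; constructor <;> nlinarith
      · right; constructor <;> nlinarith
    exact uIcc_ne_zero hsign2 (hsub ht)
  have hintble : IntervalIntegrable (rngPsi c) volume A₁ A₂ := by
    apply ContinuousOn.intervalIntegrable
    have hc1 : ContinuousOn (fun x : ℝ => Real.sin (Real.pi * x) ^ 2) (Set.uIcc A₁ A₂) :=
      ((Real.continuous_sin.comp (continuous_const.mul continuous_id)).pow 2).continuousOn
    exact (hc1.add (continuousOn_const.mul (hc1.div continuousOn_id hx0))).add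
      (continuousOn_const.mul (hc1.div (continuousOn_id.pow 2)
        (fun x hx => pow_ne_zero 2 (hx0 x hx))))
  have hFTC : (∫ u in A₁..A₂, rngPsi c u) = rngPhi c L A₂ - rngPhi c L A₁ :=
    intervalIntegral.integral_eq_sub_of_hasDerivAt hderiv hintble
  -- step 4: evaluate Phi at the endpoints
  have hB2a : B / 2 - a ≠ 0 := by rcases hacase with h | h <;> intro h0 <;> linarith
  have hB2a' : B / 2 + a ≠ 0 := by rcases hacase with h | h <;> intro h0 <;> linarith
  have hlogA₂ : Real.log A₂ = Real.log |B / 2 - a| + Real.log T := by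
    rw [hA₂, Real.log_mul hB2a hT0, Real.log_abs]
  have hlogA₁ : Real.log A₁ = Real.log |B / 2 + a| + Real.log T := by
    have : A₁ = -(B / 2 + a) * T := by rw [hA₁]; ring
    rw [this, Real.log_mul (by intro h0; apply hB2a'; linarith [neg_eq_zero.mp h0]) hT0,
      Real.log_neg_eq_log, Real.log_abs]
  have hPhi₁ : rngPhi c L A₁ = A₁ / 2 - Real.sin (2 * Real.pi * A₁) / (4 * Real.pi)
      + c * Real.log A₁ + c ^ 2 * (-(Real.sin (Real.pi * A₁) ^ 2 / A₁)) := by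
    rw [rngPhi, hLdef]
    simp [intervalIntegral.integral_same]
  have hPhi₂ : rngPhi c L A₂ = A₂ / 2 - Real.sin (2 * Real.pi * A₂) / (4 * Real.pi)
      + c * (Real.log A₂ - ∫ t in (2 * Real.pi * A₁)..(2 * Real.pi * A₂), Real.cos t / t)
      + c ^ 2 * (-(Real.sin (Real.pi * A₂) ^ 2 / A₂)
          + Real.pi * ∫ t in (2 * Real.pi * A₁)..(2 * Real.pi * A₂), Real.sin t / t) := by
    rw [rngPhi, hLdef]
  have hBT : A₂ - A₁ = B * T := by rw [hA₁, hA₂]; ring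
  -- final assembly
  rw [hsub1, hsub2, hFTC, hPhi₁, hPhi₂, smul_eq_mul, hb₀, hb₁, hb₂, ← hBT,
    hlogA₂, hlogA₁]
  rw [hLdef]
  field_simp
  ring
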